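/- Let n ≥ 1 be an integer, ε ∈ [0, 1/2), and M ≥ 2 a real number. Then the infimum of λ over all real λ > 0 for which there exists a density matrix ω on ℂ^{2^n} with T(ω, |1⟩⟨1|^{⊗n}) ≤ ε and λ·π_M^{⊗n} − ω positive semidefinite, equals (1−ε)·M^n, and this infimum is attained. -/

import Mathlib

open Matrix ComplexOrder

/-- Trace norm of a complex matrix: the trace of `sqrt(AᴴA)` (sum of singular values). -/
noncomputable def traceNorm {n : Type*} [Fintype n] [DecidableEq n]
    (A : Matrix n n ℂ) : ℝ :=
  (((Matrix.posSemidef_conjTranspose_mul_self A).1.eigenvectorUnitary : Matrix n n ℂ) *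
    diagonal ((RCLike.ofReal : ℝ → ℂ) ∘ (√·) ∘ (Matrix.posSemidef_conjTranspose_mul_self A).1.eigenvalues) *
    (star (Matrix.posSemidef_conjTranspose_mul_self A).1.eigenvectorUnitary : Matrix n n ℂ)).trace.re

/-- Trace distance `T(X,Y) = ‖X - Y‖₁ / 2`. -/
noncomputable def traceDist {n : Type*} [Fintype n] [DecidableEq n]
    (X Y : Matrix n n ℂ) : ℝ :=
  traceNorm (X - Y) / 2

/-- A density matrix: positive semidefinite with unit trace. -/
def IsDensityMatrix {n : Type*} [Fintype n] (ρ : Matrix n n ℂ) : Prop :=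
  ρ.PosSemidef ∧ ρ.trace = 1

/-- The battery Gibbs state `π_M = diag(1 - 1/M, 1/M)`. -/
noncomputable def piM (M : ℝ) : Matrix (Fin 2) (Fin 2) ℂ :=
  Matrix.diagonal ![((1 - 1/M : ℝ) : ℂ), ((1/M : ℝ) : ℂ)]

/-- The excited battery state `|1⟩⟨1| = diag(0,1)`. -/
def ket1 : Matrix (Fin 2) (Fin 2) ℂ :=
  Matrix.diagonal ![0, 1]

/-- A test (POVM effect): `0 ≤ E ≤ I`. -/
def IsTest {n : Type*} [Fintype n] [DecidableEq n] (E : Matrix n n ℂ) : Prop :=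
  E.PosSemidef ∧ (1 - E).PosSemidef

/-- Choi matrix `Σ_{ij} E_{ij} ⊗ F(E_{ij})` of a linear map on matrices. -/
noncomputable def choiMatrix {n m : Type*} [Fintype n] [DecidableEq n] [Fintype m]
    (F : Matrix n n ℂ →ₗ[ℂ] Matrix m m ℂ) :
    Matrix (n × m) (n × m) ℂ :=
  fun p q => F (Matrix.single p.1 q.1 1) p.2 q.2

/-- Completely positive (positive semidefinite Choi matrix) and trace preserving. -/
def IsCPTP {n m : Type*} [Fintype n] [DecidableEq n] [Fintype m]
    (F : Matrix n n ℂ →ₗ[ℂ] Matrix m m ℂ) : Prop :=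
  (choiMatrix F).PosSemidef ∧ ∀ X, (F X).trace = X.trace

/-- `n`-fold Kronecker (tensor) power of a `2 × 2` matrix, indexed by bit strings. -/
def tensPow (A : Matrix (Fin 2) (Fin 2) ℂ) (n : ℕ) :
    Matrix (Fin n → Fin 2) (Fin n → Fin 2) ℂ :=
  fun x y => ∏ i, A (x i) (y i)

/-- `ε`-ball (in trace distance) of density matrices around a set `𝓟`. -/
noncomputable def metBall {n : Type*} [Fintype n] [DecidableEq n]
    (ε : ℝ) (P : Set (Matrix n n ℂ)) : Set (Matrix n n ℂ) :=
  {ω | IsDensityMatrix ω ∧ ∃ ρ ∈ P, traceDist ω ρ ≤ ε}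

/-! A feasible `λ` is bounded below by comparing the entries at the all-ones string `1…1`.
An `ε`-close state has `ω(1…1) ≥ 1 - ε`: a diagonal entry of a traceless Hermitian matrix is at
most half its trace norm, because `|A| - A` and `|A| + A` are positive semidefinite. On the other
hand `λ π_M^{⊗n} ≥ ω` forces `λ M⁻ⁿ ≥ ω(1…1)`.
The bound is attained by moving weight `ε` of `|1⟩⟨1|^{⊗n}` from `1…1` to `0…0`, where
`π_M^{⊗n}` has its largest weight `(1 - 1/M)ⁿ`: this diagonal state is `ε`-close and is dominated
by `(1 - ε) Mⁿ π_M^{⊗n}` since `(1 - ε)(M - 1)ⁿ ≥ 1 - ε ≥ ε`. -/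

open scoped MatrixOrder

theorem Matrix.PosSemidef.apply_self_le_trace {ι R : Type*} [Fintype ι] [Ring R] [PartialOrder R]
    [StarRing R] [IsOrderedAddMonoid R] {A : Matrix ι ι R} (hA : A.PosSemidef) (v : ι) :
    A v v ≤ A.trace :=
  Finset.single_le_sum (f := A.diag) (fun _ _ => hA.diag_nonneg) (Finset.mem_univ v)

section TraceNorm

variable {ι : Type*} [Fintype ι] [DecidableEq ι]

theorem traceNorm_eq_re_trace_abs (A : Matrix ι ι ℂ) :
    traceNorm A = (CFC.abs A).trace.re := by
  have hA := posSemidef_conjTranspose_mul_self A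
  rw [CFC.abs, CFC.sqrt_eq_real_sqrt _ (by simpa [star_eq_conjTranspose] using hA.nonneg),
    star_eq_conjTranspose, cfcₙ_eq_cfc, hA.1.cfc_eq, IsHermitian.cfc,
    Unitary.conjStarAlgAut_apply]
  rfl

theorem traceNorm_neg (A : Matrix ι ι ℂ) : traceNorm (-A) = traceNorm A := by
  rw [traceNorm_eq_re_trace_abs, traceNorm_eq_re_trace_abs, CFC.abs_neg]

theorem Matrix.IsHermitian.two_mul_re_apply_self_le {A : Matrix ι ι ℂ} (hA : A.IsHermitian)
    (v : ι) : 2 * (A v v).re ≤ traceNorm A + A.trace.re := by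
  have hsub : (CFC.abs A - A).PosSemidef := by
    rw [← nonneg_iff_posSemidef, CFC.abs_sub_self A hA.isSelfAdjoint]
    exact nsmul_nonneg (CFC.negPart_nonneg A) 2
  have hadd : (CFC.abs A + A).PosSemidef := by
    rw [← nonneg_iff_posSemidef, CFC.abs_add_self A hA.isSelfAdjoint]
    exact nsmul_nonneg (CFC.posPart_nonneg A) 2
  have h₁ := (Complex.le_def.mp (hsub.diag_nonneg (i := v))).1
  have h₂ := (Complex.le_def.mp (hadd.apply_self_le_trace v)).1
  simp only [sub_apply, add_apply, trace_add, Complex.sub_re, Complex.add_re,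
    Complex.zero_re] at h₁ h₂
  rw [traceNorm_eq_re_trace_abs]
  linarith

theorem re_apply_self_sub_le_traceDist {ω ρ : Matrix ι ι ℂ} (hω : IsDensityMatrix ω)
    (hρ : IsDensityMatrix ρ) (v : ι) : (ρ v v - ω v v).re ≤ traceDist ω ρ := by
  have h := (hρ.1.isHermitian.sub hω.1.isHermitian).two_mul_re_apply_self_le v
  rw [trace_sub, hρ.2, hω.2, sub_self, Complex.zero_re, add_zero, ← traceNorm_neg, neg_sub,
    Matrix.sub_apply] at h
  rw [traceDist]
  linarith

end TraceNorm

section RealDiagonal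

variable {ι : Type*} [DecidableEq ι]

def realDiagonal (p : ι → ℝ) : Matrix ι ι ℂ :=
  diagonal fun i => (p i : ℂ)

@[simp]
theorem realDiagonal_apply_self (p : ι → ℝ) (i : ι) : realDiagonal p i i = p i := by
  simp [realDiagonal]

theorem posSemidef_realDiagonal_iff {p : ι → ℝ} : (realDiagonal p).PosSemidef ↔ 0 ≤ p := by
  simp [realDiagonal, Pi.le_def]

theorem realDiagonal_sub (p q : ι → ℝ) :
    realDiagonal p - realDiagonal q = realDiagonal (p - q) := by
  simp [realDiagonal, diagonal_sub]

theorem smul_realDiagonal (l : ℝ) (p : ι → ℝ) : l • realDiagonal p = realDiagonal (l • p) := by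
  ext i j
  by_cases h : i = j <;> simp [realDiagonal, h, diagonal_apply_ne, Complex.real_smul]

variable [Fintype ι]

theorem abs_realDiagonal (p : ι → ℝ) :
    CFC.abs (realDiagonal p) = realDiagonal fun i => |p i| := by
  refine CFC.sqrt_unique ?_ (nonneg_iff_posSemidef.mpr
    (posSemidef_realDiagonal_iff.mpr fun i => abs_nonneg (p i)))
  simp only [realDiagonal, star_eq_conjTranspose, diagonal_conjTranspose, diagonal_mul_diagonal]
  congr 1
  funext i
  simp [← Complex.ofReal_mul, abs_mul_abs_self]

theorem trace_realDiagonal (p : ι → ℝ) : (realDiagonal p).trace = ((∑ i, p i : ℝ) : ℂ) := by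
  simp [realDiagonal]

theorem traceNorm_realDiagonal (p : ι → ℝ) : traceNorm (realDiagonal p) = ∑ i, |p i| := by
  rw [traceNorm_eq_re_trace_abs, abs_realDiagonal, trace_realDiagonal, Complex.ofReal_re]

theorem isDensityMatrix_realDiagonal_iff {p : ι → ℝ} :
    IsDensityMatrix (realDiagonal p) ↔ 0 ≤ p ∧ ∑ i, p i = 1 := by
  rw [IsDensityMatrix, posSemidef_realDiagonal_iff, trace_realDiagonal]
  norm_cast

theorem traceDist_realDiagonal (p q : ι → ℝ) :
    traceDist (realDiagonal p) (realDiagonal q) = (∑ i, |p i - q i|) / 2 := by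
  rw [traceDist, realDiagonal_sub, traceNorm_realDiagonal]
  rfl

end RealDiagonal

section Qubits

theorem tensPow_realDiagonal (q : Fin 2 → ℝ) (n : ℕ) :
    tensPow (realDiagonal q) n = realDiagonal fun x => ∏ i, q (x i) := by
  ext x y
  by_cases h : x = y
  · subst h
    simp [tensPow, realDiagonal]
  · obtain ⟨i, hi⟩ := Function.ne_iff.mp h
    simp only [tensPow, realDiagonal, diagonal_apply_ne _ h]
    exact Finset.prod_eq_zero (Finset.mem_univ i) (diagonal_apply_ne _ hi)

theorem ket1_eq_realDiagonal : ket1 = realDiagonal (Pi.single 1 1) := by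
  rw [ket1, realDiagonal]
  congr 1
  funext i
  fin_cases i <;> simp

theorem piM_eq_realDiagonal (M : ℝ) : piM M = realDiagonal ![1 - 1 / M, 1 / M] := by
  rw [piM, realDiagonal]
  congr 1
  funext i
  fin_cases i <;> simp

theorem tensPow_ket1 (n : ℕ) : tensPow ket1 n = realDiagonal (Pi.single (fun _ => 1) 1) := by
  rw [ket1_eq_realDiagonal, tensPow_realDiagonal]
  congr 1
  funext x
  simp only [Pi.single_apply, Finset.prod_boole, Finset.mem_univ, true_implies, funext_iff]

end Qubits

section Optimal

variable {n : ℕ}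

theorem isDensityMatrix_tensPow_ket1 : IsDensityMatrix (tensPow ket1 n) := by
  rw [tensPow_ket1, isDensityMatrix_realDiagonal_iff]
  exact ⟨Pi.single_nonneg.mpr zero_le_one, by simp⟩

theorem le_of_posSemidef_smul_tensPow_piM_sub {ε l M : ℝ} (hM : 0 < M)
    {ω : Matrix (Fin n → Fin 2) (Fin n → Fin 2) ℂ} (hω : IsDensityMatrix ω)
    (hdist : traceDist ω (tensPow ket1 n) ≤ ε) (hl : (l • tensPow (piM M) n - ω).PosSemidef) :
    (1 - ε) * M ^ n ≤ l := by
  set v : Fin n → Fin 2 := fun _ => 1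
  have hρv : tensPow ket1 n v v = 1 := by simp [tensPow_ket1, v]
  have hπv : tensPow (piM M) n v v = ((M ^ n)⁻¹ : ℝ) := by
    simp [piM_eq_realDiagonal, tensPow_realDiagonal, v]
  have hsmooth := re_apply_self_sub_le_traceDist hω isDensityMatrix_tensPow_ket1 v
  have hdom := (Complex.le_def.mp (hl.diag_nonneg (i := v))).1
  rw [hρv, Complex.sub_re, Complex.one_re] at hsmooth
  rw [Matrix.sub_apply, Matrix.smul_apply, hπv, Complex.real_smul, Complex.sub_re,
    ← Complex.ofReal_mul, Complex.ofReal_re, Complex.zero_re] at hdom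
  rw [← le_div_iff₀ (pow_pos hM n), div_eq_mul_inv]
  linarith

theorem const_one_ne_const_zero (hn : 1 ≤ n) : (fun _ : Fin n => (1 : Fin 2)) ≠ fun _ => 0 :=
  fun h => absurd (congrFun h ⟨0, hn⟩) (by decide)

def optimalState (n : ℕ) (ε : ℝ) : Matrix (Fin n → Fin 2) (Fin n → Fin 2) ℂ :=
  realDiagonal (Pi.single (fun _ => 1) (1 - ε) + Pi.single (fun _ => 0) ε)

theorem isDensityMatrix_optimalState {ε : ℝ} (hε₀ : 0 ≤ ε) (hε₁ : ε ≤ 1) :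
    IsDensityMatrix (optimalState n ε) := by
  rw [optimalState, isDensityMatrix_realDiagonal_iff]
  refine ⟨add_nonneg (Pi.single_nonneg.mpr (by linarith)) (Pi.single_nonneg.mpr hε₀), ?_⟩
  simp [Finset.sum_add_distrib]

theorem traceDist_optimalState_tensPow_ket1 {ε : ℝ} (hε₀ : 0 ≤ ε) :
    traceDist (optimalState n ε) (tensPow ket1 n) ≤ ε := by
  rw [optimalState, tensPow_ket1, traceDist_realDiagonal]
  set v₁ : Fin n → Fin 2 := fun _ => 1
  set v₀ : Fin n → Fin 2 := fun _ => 0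
  set f₁ : (Fin n → Fin 2) → ℝ := Pi.single v₁ ε
  set f₀ : (Fin n → Fin 2) → ℝ := Pi.single v₀ ε
  calc _ = (∑ x, |f₀ x - f₁ x|) / 2 := by
        congr 1
        refine Finset.sum_congr rfl fun x _ => ?_
        simp only [f₀, f₁, Pi.add_apply, Pi.single_apply]
        split_ifs <;> ring_nf
    _ ≤ (∑ x, (|f₀ x| + |f₁ x|)) / 2 := by
        gcongr with x
        exact abs_sub _ _
    _ = ε := by
        have habs (v : Fin n → Fin 2) (x) :
            |(Pi.single v ε : _ → ℝ) x| = (Pi.single v ε : _ → ℝ) x :=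
          abs_of_nonneg ((Pi.single_nonneg (α := fun _ => ℝ)).mpr hε₀ x)
        simp only [f₀, f₁, habs, Finset.sum_add_distrib, Finset.sum_pi_single', Finset.mem_univ,
          if_true]
        ring

theorem posSemidef_smul_tensPow_piM_sub_optimalState (hn : 1 ≤ n) {ε M : ℝ}
    (hε : ε ≤ 1 / 2) (hM : 2 ≤ M) :
    (((1 - ε) * M ^ n) • tensPow (piM M) n - optimalState n ε).PosSemidef := by
  have hM₀ : 0 < M := by linarith
  rw [piM_eq_realDiagonal, tensPow_realDiagonal, smul_realDiagonal, optimalState,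
    realDiagonal_sub, posSemidef_realDiagonal_iff]
  intro x
  simp only [Pi.zero_apply, Pi.sub_apply, Pi.smul_apply, Pi.add_apply, smul_eq_mul, sub_nonneg]
  have hne := const_one_ne_const_zero hn
  by_cases h₁ : x = fun _ => 1
  · subst h₁
    rw [Pi.single_eq_same, Pi.single_eq_of_ne hne, add_zero, Finset.prod_const, Finset.card_univ,
      Fintype.card_fin, show ![1 - 1 / M, 1 / M] 1 = 1 / M from rfl, mul_assoc, ← mul_pow,
      mul_one_div_cancel hM₀.ne', one_pow, mul_one]
  by_cases h₀ : x = fun _ => 0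
  · subst h₀
    rw [Pi.single_eq_of_ne hne.symm, Pi.single_eq_same, zero_add, Finset.prod_const,
      Finset.card_univ, Fintype.card_fin, show ![1 - 1 / M, 1 / M] 0 = 1 - 1 / M from rfl,
      mul_assoc, ← mul_pow, mul_one_sub, mul_one_div_cancel hM₀.ne']
    calc ε ≤ 1 - ε := by linarith
      _ ≤ (1 - ε) * (M - 1) ^ n :=
        le_mul_of_one_le_right (by linarith) (one_le_pow₀ (by linarith))
  have hq (j : Fin 2) : 0 ≤ ![1 - 1 / M, 1 / M] j := by
    fin_cases j
    · exact sub_nonneg.mpr ((div_le_one hM₀).mpr (by linarith))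
    · exact (one_div_pos.mpr hM₀).le
  rw [Pi.single_eq_of_ne h₁, Pi.single_eq_of_ne h₀, add_zero]
  exact mul_nonneg (mul_nonneg (by linarith) (by positivity))
    (Finset.prod_nonneg fun i _ => hq (x i))

end Optimal

/-- the smoothed max-relative entropy value for `n` copies: the
optimal `λ` with `λ·π_M^{⊗n} ≥ ω` for some `ω` that is `ε`-close to
`|1⟩⟨1|^{⊗n}` equals `(1-ε)·Mⁿ`, and is attained. -/
theorem stmt_15 (n : ℕ) (hn : 1 ≤ n) (ε : ℝ) (hε : ε ∈ Set.Ico (0:ℝ) (1/2))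
    (M : ℝ) (hM : 2 ≤ M)
    (S : Set ℝ)
    (hS : S = {l : ℝ | 0 < l ∧ ∃ ω : Matrix (Fin n → Fin 2) (Fin n → Fin 2) ℂ,
      IsDensityMatrix ω ∧ traceDist ω (tensPow ket1 n) ≤ ε ∧
      (l • tensPow (piM M) n - ω).PosSemidef}) :
    sInf S = (1 - ε) * M ^ n ∧ (1 - ε) * M ^ n ∈ S := by
  obtain ⟨hε₀, hε⟩ := hε
  have hM₀ : 0 < M := by linarith
  have hmem : (1 - ε) * M ^ n ∈ S := by
    rw [hS]
    exact ⟨mul_pos (by linarith) (pow_pos hM₀ n), optimalState n ε,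
      isDensityMatrix_optimalState hε₀ (by linarith), traceDist_optimalState_tensPow_ket1 hε₀,
      posSemidef_smul_tensPow_piM_sub_optimalState hn hε.le hM⟩
  have hlower : (1 - ε) * M ^ n ∈ lowerBounds S := by
    rw [hS]
    rintro l ⟨-, ω, hω, hdist, hl⟩
    exact le_of_posSemidef_smul_tensPow_piM_sub hM₀ hω hdist hl
  exact ⟨IsLeast.csInf_eq ⟨hmem, hlower⟩, hmem⟩
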